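/- Let U be a topological space admitting, for every open cover, a partition of unity subordinate to it (e.g. U a paracompact smooth manifold with smooth partitions of unity, modeled as: U a topological space with subordinate partitions of unity). Let f : E₁ → E₂ be a fiberwise-linear continuous surjection of vector bundles over B admitting local continuous sections over an open cover of U along a given map, and g : U → E₂ a continuous map over B admitting local lifts hᵢ : Uᵢ → E₁ on an open cover {Uᵢ} of U with a subordinate partition of unity {λᵢ}. Then the map u ↦ Σᵢ λᵢ(u) · hᵢ(u) (extended by the zero section outside supp λᵢ) is a global lift of g through f. -/

import Mathlib

open scoped Classical

theorem PartitionOfUnity.map_finsum_smul_eq {ι X M N : Type*} [TopologicalSpace X]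
    [AddCommMonoid M] [Module ℝ M] [AddCommMonoid N] [Module ℝ N] {s : Set X}
    (ρ : PartitionOfUnity ι X s) (φ : M →ₗ[ℝ] N) {x : X} (hx : x ∈ s) (v : ι → M) (y : N)
    (hv : ∀ i, ρ i x ≠ 0 → φ (v i) = y) :
    φ (∑ᶠ i, ρ i x • v i) = y := by
  have hterm : ∀ i ∈ ρ.finsupport x, φ (ρ i x • v i) = ρ i x • y := fun i hi => by
    rw [map_smul, hv i ((ρ.mem_finsupport x).mp hi)]
  rw [← ρ.sum_finsupport_smul_eq_finsum (fun i _ => v i), map_sum, Finset.sum_congr rfl hterm,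
    ← Finset.sum_smul, ρ.sum_finsupport hx, one_smul]

theorem stmt_6_general {ι U B : Type*} [TopologicalSpace U]
    (E₁ E₂ : B → Type*) [∀ b, AddCommGroup (E₁ b)] [∀ b, Module ℝ (E₁ b)]
    [∀ b, AddCommGroup (E₂ b)] [∀ b, Module ℝ (E₂ b)]
    (f : ∀ b, E₁ b →ₗ[ℝ] E₂ b) (β : U → B) (g : ∀ u : U, E₂ (β u))
    (V : ι → Set U)
    (lam : PartitionOfUnity ι U Set.univ)
    (hsub : ∀ i, ∀ u : U, lam i u ≠ 0 → u ∈ V i)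
    (h : ι → ∀ u : U, E₁ (β u))
    (hlift : ∀ i, ∀ u ∈ V i, f (β u) (h i u) = g u) :
    ∀ u : U, f (β u) (∑ᶠ i, lam i u • (if u ∈ V i then h i u else 0)) = g u := by
  intro u
  refine lam.map_finsum_smul_eq (f (β u)) (Set.mem_univ u) _ (g u) fun i hi => ?_
  rw [if_pos (hsub i u hi), hlift i u (hsub i u hi)]

theorem stmt_6 {ι U B : Type*} [TopologicalSpace U]
    (E₁ E₂ : B → Type*) [∀ b, AddCommGroup (E₁ b)] [∀ b, Module ℝ (E₁ b)]
    [∀ b, AddCommGroup (E₂ b)] [∀ b, Module ℝ (E₂ b)]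
    (f : ∀ b, E₁ b →ₗ[ℝ] E₂ b) (β : U → B) (g : ∀ u : U, E₂ (β u))
    (V : ι → Set U) (hVopen : ∀ i, IsOpen (V i)) (hVcov : ∀ u : U, ∃ i, u ∈ V i)
    (lam : PartitionOfUnity ι U Set.univ)
    (hsub : ∀ i, ∀ u : U, lam i u ≠ 0 → u ∈ V i)
    (h : ι → ∀ u : U, E₁ (β u))
    (hlift : ∀ i, ∀ u ∈ V i, f (β u) (h i u) = g u) :
    ∀ u : U, f (β u) (∑ᶠ i, lam i u • (if u ∈ V i then h i u else 0)) = g u :=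
  stmt_6_general E₁ E₂ f β g V lam hsub h hlift
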